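/- arXiv:1807.10789 — 5 statements merged into one kernel-verified Lean document; each statement's English description precedes it below -/
import Mathlib

section
/- If v ∈ V(G) has degree 4 and u, w are two of its neighbours of degree 3, with thr(v) = thr(u) = thr(w) and all thresholds equal to 3, then any perfect target set contains at least one of u, v, w. -/
open scoped Classical

noncomputable def actSeq {V : Type*} [Fintype V] (G : SimpleGraph V) (thr : V → ℕ)
    (X : Finset V) : ℕ → Finset V
  | 0 => X
  | i + 1 => actSeq G thr X i ∪
      Finset.univ.filter (fun v => thr v ≤ (G.neighborFinset v ∩ actSeq G thr X i).card)

noncomputable def actFinal {V : Type*} [Fintype V] (G : SimpleGraph V) (thr : V → ℕ)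
    (X : Finset V) : Finset V :=
  actSeq G thr X (Fintype.card V)

def IsPerfectTargetSet {V : Type*} [Fintype V] (G : SimpleGraph V) (thr : V → ℕ)
    (X : Finset V) : Prop :=
  actFinal G thr X = Finset.univ

theorem deg_four_two_deg_three_neighbours {V : Type*} [Fintype V]
    (G : SimpleGraph V) (thr : V → ℕ) (hthr : ∀ x : V, thr x = 3)
    (v u w : V) (huw : u ≠ w) (hvu : G.Adj v u) (hvw : G.Adj v w)
    (hdv : G.degree v = 4) (hdu : G.degree u = 3) (hdw : G.degree w = 3)
    (X : Finset V) (hX : IsPerfectTargetSet G thr X) :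
    u ∈ X ∨ v ∈ X ∨ w ∈ X := by
  by_contra h
  push_neg at h
  obtain ⟨hu, hv, hw⟩ := h
  have key : ∀ i, u ∉ actSeq G thr X i ∧ v ∉ actSeq G thr X i ∧ w ∉ actSeq G thr X i := by
    intro i
    induction i with
    | zero => exact ⟨hu, hv, hw⟩
    | succ i ih =>
      obtain ⟨ihu, ihv, ihw⟩ := ih
      have deg3 : ∀ z : V, G.degree z = 3 → G.Adj v z → z ∉ actSeq G thr X i →
          z ∉ actSeq G thr X (i + 1) := by
        intro z hdz hvz hzn hz
        simp only [actSeq, Finset.mem_union, Finset.mem_filter, Finset.mem_univ, true_and] at hz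
        rcases hz with hz | hz
        · exact hzn hz
        · have hsub : G.neighborFinset z ∩ actSeq G thr X i ⊆ G.neighborFinset z \ {v} := by
            intro x hx
            simp only [Finset.mem_inter] at hx
            simp only [Finset.mem_sdiff, Finset.mem_singleton]
            exact ⟨hx.1, fun hxv => ihv (hxv ▸ hx.2)⟩
          have hcard := Finset.card_le_card hsub
          have hvm : v ∈ G.neighborFinset z := by
            rw [SimpleGraph.mem_neighborFinset]
            exact hvz.symm
          have h2 : (G.neighborFinset z \ {v}).card = 2 := by
            rw [Finset.card_sdiff_of_subset (Finset.singleton_subset_iff.mpr hvm)]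
            rw [Finset.card_singleton, G.card_neighborFinset_eq_degree, hdz]
          rw [hthr] at hz
          omega
      refine ⟨deg3 u hdu hvu ihu, ?_, deg3 w hdw hvw ihw⟩
      intro hz
      simp only [actSeq, Finset.mem_union, Finset.mem_filter, Finset.mem_univ, true_and] at hz
      rcases hz with hz | hz
      · exact ihv hz
      · have hsub : G.neighborFinset v ∩ actSeq G thr X i ⊆ G.neighborFinset v \ {u, w} := by
          intro x hx
          simp only [Finset.mem_inter] at hx
          simp only [Finset.mem_sdiff, Finset.mem_insert, Finset.mem_singleton]
          refine ⟨hx.1, ?_⟩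
          rintro (rfl | rfl)
          · exact ihu hx.2
          · exact ihw hx.2
        have hcard := Finset.card_le_card hsub
        have hsub2 : ({u, w} : Finset V) ⊆ G.neighborFinset v := by
          intro x hx
          simp only [Finset.mem_insert, Finset.mem_singleton] at hx
          rcases hx with rfl | rfl
          · rwa [SimpleGraph.mem_neighborFinset]
          · rwa [SimpleGraph.mem_neighborFinset]
        have h2 : (G.neighborFinset v \ {u, w}).card = 2 := by
          rw [Finset.card_sdiff_of_subset hsub2, Finset.card_insert_of_notMem (by simpa using huw),
            Finset.card_singleton, G.card_neighborFinset_eq_degree, hdv]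
        rw [hthr] at hz
        omega
  have := key (Fintype.card V)
  have hvmem : v ∈ actFinal G thr X := by rw [hX]; exact Finset.mem_univ v
  exact this.2.1 hvmem
end

section
/- Every connected graph G with at least 3 vertices and threshold function satisfying thr(v) ≤ ⌈deg(v)/3⌉ for every vertex v has a perfect target set of size at most 0.45·|V(G)|. -/
open scoped Classical

/-!
Call a vertex inner if it has degree at least two; since `G` is connected with at least three
vertices, every other vertex is a leaf hanging on an inner vertex. Fix an ordering `σ` of the
vertices that puts all leaves last and select each inner vertex `w` having fewer than `thr w`
inner neighbours before it. Activating along the ordering shows the selection is a perfect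
target set: each unselected vertex has at least `thr` active neighbours when its turn comes
(a leaf has threshold at most `1` and its inner neighbour precedes it).

For a uniformly random `σ`, the rank of an inner vertex `w` among itself and its `b` inner
neighbours is uniform, so `w` is selected with probability `min (thr w) (b + 1) / (b + 1)`. With
`l` leaves attached to `w`, the bound `3 thr w ≤ b + l + 2` makes this at most `9 (1 + l) / 20`,
and summing over the inner vertices, which together with their leaves cover `V` exactly once,
the expected size is at most `0.45 |V|`.
-/

open Finset

section Activation

variable {V : Type*} [Fintype V] {G : SimpleGraph V} {thr : V → ℕ} {X : Finset V}

lemma actSeq_mono : Monotone (actSeq G thr X) :=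
  monotone_nat_of_le_succ fun _ => subset_union_left

lemma mem_actSeq_succ {i : ℕ} {v : V} (h : thr v ≤ #(G.neighborFinset v ∩ actSeq G thr X i)) :
    v ∈ actSeq G thr X (i + 1) :=
  mem_union_right _ (mem_filter.mpr ⟨mem_univ v, h⟩)

noncomputable def targetSetOfOrder {α : Type*} [Preorder α] [DecidableLT α]
    (G : SimpleGraph V) (thr : V → ℕ) (f : V → α) : Finset V :=
  {w | #{u ∈ G.neighborFinset w | f u < f w} < thr w}

variable {α : Type*} [Preorder α] [DecidableLT α] {f : V → α}

lemma mem_actSeq_targetSetOfOrder (k : ℕ) :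
    ∀ w, #{u | f u < f w} < k → w ∈ actSeq G thr (targetSetOfOrder G thr f) k := by
  induction k with
  | zero => intro w h; exact absurd h (Nat.not_lt_zero _)
  | succ k ih =>
    intro w hw
    by_cases hX : w ∈ targetSetOfOrder G thr f
    · exact actSeq_mono (Nat.zero_le _) hX
    have hthr : thr w ≤ #{u ∈ G.neighborFinset w | f u < f w} := by
      simpa [targetSetOfOrder] using hX
    refine mem_actSeq_succ (hthr.trans (card_le_card fun u hu => ?_))
    obtain ⟨hadj, hlt⟩ := mem_filter.mp hu
    refine mem_inter.mpr ⟨hadj, ih u ?_⟩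
    have hbelow : ({x | f x < f u} : Finset V) ⊂ ({x | f x < f w} : Finset V) :=
      (ssubset_iff_of_subset fun x hx => by simpa using (mem_filter.mp hx).2.trans hlt).mpr
        ⟨u, by simpa using hlt, by simp⟩
    exact (card_lt_card hbelow).trans_le (Nat.lt_succ_iff.mp hw)

theorem isPerfectTargetSet_targetSetOfOrder :
    IsPerfectTargetSet G thr (targetSetOfOrder G thr f) :=
  eq_univ_of_forall fun w =>
    mem_actSeq_targetSetOfOrder _ w (card_lt_univ_of_notMem (x := w) (by simp))

end Activation

section Rank

variable {V : Type*}

lemma card_filter_rank_lt {α : Type*} [LinearOrder α] (C : Finset V) {f : V → α}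
    (hf : Function.Injective f) (t : ℕ) :
    #{w ∈ C | #{u ∈ C | f u < f w} < t} = min t #C := by
  set rank : V → ℕ := fun w => #{u ∈ C | f u < f w}
  have rank_lt_rank : ∀ {u w}, u ∈ C → f u < f w → rank u < rank w := fun hu hlt =>
    card_lt_card <| (ssubset_iff_of_subset fun x hx => by
      simp only [mem_filter] at hx ⊢; exact ⟨hx.1, hx.2.trans hlt⟩).mpr
        ⟨_, mem_filter.mpr ⟨hu, hlt⟩, by simp⟩
  have hinj : Set.InjOn rank C := fun u hu w hw h => by
    by_contra hne
    rcases lt_or_gt_of_ne (hf.ne hne) with hlt | hlt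
    · exact (rank_lt_rank hu hlt).ne h
    · exact (rank_lt_rank hw hlt).ne' h
  have himage : C.image rank = range #C := by
    refine eq_of_subset_of_card_le (fun k hk => ?_) (by rw [card_range, card_image_of_injOn hinj])
    obtain ⟨w, hw, rfl⟩ := mem_image.mp hk
    exact mem_range.mpr <| card_lt_card <| filter_ssubset.mpr ⟨w, hw, lt_irrefl _⟩
  calc #{w ∈ C | rank w < t} = #((C.image rank).filter (· < t)) := by
        rw [filter_image, card_image_of_injOn (hinj.mono (filter_subset _ _))]
    _ = min t #C := by
        rw [himage, ← card_range (min t #C)]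
        congr 1
        ext k
        simp [and_comm]

variable [Fintype V]

/-- Transposing `w` and `w'` before an ordering exchanges their ranks within `C`. -/
lemma card_rank_lt_eq_of_mem (C : Finset V) {w w' : V} (hw : w ∈ C) (hw' : w' ∈ C) (t : ℕ) :
    #{σ : V ≃ Fin (Fintype.card V) | #{u ∈ C | σ u < σ w} < t} =
      #{σ : V ≃ Fin (Fintype.card V) | #{u ∈ C | σ u < σ w'} < t} := by
  have swap_mem : ∀ {u}, u ∈ C → Equiv.swap w w' u ∈ C := fun hu => by
    rw [Equiv.swap_apply_def]; split_ifs <;> assumption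
  have rank_swap : ∀ (σ : V ≃ Fin (Fintype.card V)) (x : Fin (Fintype.card V)),
      #{u ∈ C | σ (Equiv.swap w w' u) < x} = #{u ∈ C | σ u < x} := fun σ x => by
    refine card_nbij' (Equiv.swap w w') (Equiv.swap w w') ?_ ?_ ?_ ?_ <;>
      intro u hu <;> simp_all
  refine card_nbij' ((Equiv.swap w w').trans ·) ((Equiv.swap w w').trans ·) ?_ ?_ ?_ ?_ <;>
    intro σ hσ <;> simp_all [← Equiv.trans_assoc]

lemma card_mul_card_rank_lt (C : Finset V) {w : V} (hw : w ∈ C) (t : ℕ) :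
    #C * #{σ : V ≃ Fin (Fintype.card V) | #{u ∈ C | σ u < σ w} < t} =
      min t #C * Fintype.card (V ≃ Fin (Fintype.card V)) := by
  calc #C * #{σ : V ≃ Fin (Fintype.card V) | #{u ∈ C | σ u < σ w} < t}
      = ∑ w' ∈ C, #{σ : V ≃ Fin (Fintype.card V) | #{u ∈ C | σ u < σ w'} < t} := by
        rw [sum_congr rfl fun w' hw' => card_rank_lt_eq_of_mem C hw' hw t, sum_const, smul_eq_mul]
    _ = ∑ σ : V ≃ Fin (Fintype.card V), #{w' ∈ C | #{u ∈ C | σ u < σ w'} < t} := by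
        simp only [card_filter]; exact sum_comm
    _ = ∑ _σ : V ≃ Fin (Fintype.card V), min t #C :=
        sum_congr rfl fun σ _ => card_filter_rank_lt C σ.injective t
    _ = min t #C * Fintype.card (V ≃ Fin (Fintype.card V)) := by
        rw [sum_const, card_univ, smul_eq_mul, mul_comm]

end Rank

section Graph

variable {V : Type*} [Fintype V] {G : SimpleGraph V}

lemma neighborFinset_eq_singleton_of_degree_eq_one {u v : V} (hv : G.degree v = 1)
    (huv : G.Adj v u) : G.neighborFinset v = {u} :=
  (eq_of_subset_of_card_le (singleton_subset_iff.mpr ((G.mem_neighborFinset v u).mpr huv))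
    (by rw [SimpleGraph.card_neighborFinset_eq_degree, hv, card_singleton])).symm

lemma exists_neighborFinset_eq_singleton (hconn : G.Connected) (hcard : 3 ≤ Fintype.card V)
    {v : V} (hv : G.degree v < 2) : ∃ u, 2 ≤ G.degree u ∧ G.neighborFinset v = {u} := by
  have hpos : ∀ x, 0 < G.degree x := by
    have : Nontrivial V := Fintype.one_lt_card_iff_nontrivial.mp (by omega)
    exact fun x => hconn.preconnected.degree_pos_of_nontrivial x
  obtain ⟨u, huv⟩ := (G.degree_pos_iff_exists_adj v).mp (hpos v)
  have hNv := neighborFinset_eq_singleton_of_degree_eq_one (by have := hpos v; omega) huv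
  refine ⟨u, ?_, hNv⟩
  by_contra! hu
  have hNu := neighborFinset_eq_singleton_of_degree_eq_one (by have := hpos u; omega) huv.symm
  have hlt : #({u, v} : Finset V) < #(univ : Finset V) := by
    have := card_le_two (a := u) (b := v)
    rw [card_univ]; omega
  obtain ⟨w, -, hw⟩ := exists_mem_notMem_of_card_lt_card hlt
  obtain ⟨p⟩ := hconn.preconnected v w
  obtain ⟨d, -, hd, hd'⟩ := p.exists_boundary_dart {u, v} (by simp) (by simp at hw; simpa using hw)
  have hadj : d.snd ∈ G.neighborFinset d.fst := (G.mem_neighborFinset _ _).mpr d.adj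
  rcases hd with hd | hd <;> rw [hd] at hadj <;> simp_all

end Graph

lemma three_mul_le_add_two_of_le_ceil {t d : ℕ} (h : t ≤ ⌈(d : ℚ) / 3⌉₊) : 3 * t ≤ d + 2 := by
  have : (t : ℚ) < d / 3 + 1 := (Nat.cast_le.mpr h).trans_lt (Nat.ceil_lt_add_one (by positivity))
  have : 3 * t < d + 3 := by exact_mod_cast (by linarith : (3 * t : ℚ) < d + 3)
  omega

/-- The worst case is `t = b = 2`, `l = 0`, where the ratio is `4 / 9 ≤ 9 / 20`. -/
lemma twenty_mul_min_le {t b l : ℕ} (ht : 3 * t ≤ b + l + 2) (hbl : 2 ≤ b + l) :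
    20 * min t (b + 1) ≤ 9 * (1 + l) * (b + 1) := by
  rcases l with _ | _ | l
  · omega
  · omega
  · nlinarith [min_le_right t (b + 1)]

section LeafLast

variable {V : Type*} [Fintype V] {G : SimpleGraph V} {thr : V → ℕ} {S : Finset V}

noncomputable def leafLastKey (S : Finset V) (σ : V ≃ Fin (Fintype.card V)) (v : V) : ℕ :=
  if v ∈ S then σ v else Fintype.card V

lemma targetSetOfOrder_leafLastKey (hS : ∀ v ∉ S, ∃ u ∈ S, G.neighborFinset v = {u})
    (hthr : ∀ v ∉ S, thr v ≤ 1) (σ : V ≃ Fin (Fintype.card V)) :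
    targetSetOfOrder G thr (leafLastKey S σ) =
      {w ∈ S | #{u ∈ G.neighborFinset w ∩ S | σ u < σ w} < thr w} := by
  ext w
  by_cases hw : w ∈ S
  · have hbelow : {u ∈ G.neighborFinset w | leafLastKey S σ u < leafLastKey S σ w} =
        {u ∈ G.neighborFinset w ∩ S | σ u < σ w} := by
      ext u
      by_cases hu : u ∈ S <;> simp [leafLastKey, hu, hw, (σ w).is_lt.le]
    simp [targetSetOfOrder, hw, hbelow]
  · obtain ⟨u, hu, hN⟩ := hS w hw
    have hbelow : {x ∈ G.neighborFinset w | leafLastKey S σ x < leafLastKey S σ w} = {u} := by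
      rw [hN, filter_singleton, if_pos (by simp [leafLastKey, hu, hw])]
    simp [targetSetOfOrder, hw, hbelow, hthr w hw]

lemma sum_one_add_card_neighborFinset_sdiff (hS : ∀ v ∉ S, ∃ u ∈ S, G.neighborFinset v = {u}) :
    ∑ w ∈ S, (1 + #(G.neighborFinset w \ S)) = Fintype.card V := by
  have hcross : ∑ w ∈ S, #(G.neighborFinset w \ S) = #Sᶜ :=
    calc ∑ w ∈ S, #(G.neighborFinset w \ S) = ∑ w ∈ S, #(Sᶜ.bipartiteAbove G.Adj w) := by
          refine sum_congr rfl fun w _ => congrArg card ?_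
          ext v; simp [bipartiteAbove, and_comm]
      _ = ∑ v ∈ Sᶜ, #(S.bipartiteBelow G.Adj v) :=
          sum_card_bipartiteAbove_eq_sum_card_bipartiteBelow _
      _ = ∑ v ∈ Sᶜ, 1 := sum_congr rfl fun v hv => by
          obtain ⟨u, hu, hN⟩ := hS v (mem_compl.mp hv)
          have hadj : ∀ x, G.Adj v x ↔ x = u := fun x => by
            rw [← G.mem_neighborFinset, hN, mem_singleton]
          rw [card_eq_one]
          refine ⟨u, ext fun x => ?_⟩
          simp only [bipartiteBelow, mem_filter, G.adj_comm x v, hadj, mem_singleton]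
          exact ⟨And.right, fun hx => ⟨hx ▸ hu, hx⟩⟩
      _ = #Sᶜ := by rw [card_eq_sum_ones]
  rw [sum_add_distrib, hcross, sum_const, smul_eq_mul, mul_one, card_add_card_compl]

lemma twenty_mul_card_rank_lt_le (S : Finset V) {w : V} {t : ℕ} (hw : 2 ≤ G.degree w)
    (ht : 3 * t ≤ G.degree w + 2) :
    20 * #{σ : V ≃ Fin (Fintype.card V) | #{u ∈ G.neighborFinset w ∩ S | σ u < σ w} < t} ≤
      9 * (1 + #(G.neighborFinset w \ S)) * Fintype.card (V ≃ Fin (Fintype.card V)) := by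
  set B := G.neighborFinset w ∩ S
  set l := #(G.neighborFinset w \ S)
  have hwB : w ∉ B := by simp [B]
  have hcount := card_mul_card_rank_lt (insert w B) (mem_insert_self w B) t
  simp only [filter_insert, lt_irrefl, if_false, card_insert_of_notMem hwB] at hcount
  have hsplit : #B + l = G.degree w := card_inter_add_card_sdiff _ _
  have hmin := twenty_mul_min_le (t := t) (b := #B) (l := l) (by omega) (by omega)
  refine Nat.le_of_mul_le_mul_left ?_ (Nat.succ_pos #B)
  calc (#B + 1) * (20 * #{σ : V ≃ Fin (Fintype.card V) | #{u ∈ B | σ u < σ w} < t})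
      = 20 * min t (#B + 1) * Fintype.card (V ≃ Fin (Fintype.card V)) := by
        rw [mul_left_comm, hcount, mul_assoc]
    _ ≤ 9 * (1 + l) * (#B + 1) * Fintype.card (V ≃ Fin (Fintype.card V)) :=
        Nat.mul_le_mul_right _ hmin
    _ = (#B + 1) * (9 * (1 + l) * Fintype.card (V ≃ Fin (Fintype.card V))) := by ring

lemma exists_twenty_mul_card_le (hS : ∀ v ∉ S, ∃ u ∈ S, G.neighborFinset v = {u})
    (hdeg : ∀ w ∈ S, 2 ≤ G.degree w) (hthr : ∀ w, 3 * thr w ≤ G.degree w + 2) :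
    ∃ σ : V ≃ Fin (Fintype.card V),
      20 * #{w ∈ S | #{u ∈ G.neighborFinset w ∩ S | σ u < σ w} < thr w} ≤
        9 * Fintype.card V := by
  have htotal : ∑ σ : V ≃ Fin (Fintype.card V),
      20 * #{w ∈ S | #{u ∈ G.neighborFinset w ∩ S | σ u < σ w} < thr w} ≤
        ∑ _σ : V ≃ Fin (Fintype.card V), 9 * Fintype.card V :=
    calc _ = ∑ w ∈ S, 20 * #{σ : V ≃ Fin (Fintype.card V) |
              #{u ∈ G.neighborFinset w ∩ S | σ u < σ w} < thr w} := by
          simp only [← mul_sum, card_filter]; rw [sum_comm]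
      _ ≤ ∑ w ∈ S, 9 * (1 + #(G.neighborFinset w \ S)) *
            Fintype.card (V ≃ Fin (Fintype.card V)) :=
          sum_le_sum fun w hw => twenty_mul_card_rank_lt_le S (hdeg w hw) (hthr w)
      _ = _ := by
          rw [← sum_mul, ← mul_sum, sum_one_add_card_neighborFinset_sdiff hS, sum_const,
            card_univ, smul_eq_mul, mul_comm]
  obtain ⟨σ, -, hσ⟩ := exists_le_of_sum_le ⟨Fintype.equivFin V, mem_univ _⟩ htotal
  exact ⟨σ, hσ⟩

end LeafLast

theorem perfect_target_set_one_third_thresholds {V : Type*} [Fintype V]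
    (G : SimpleGraph V) (thr : V → ℕ) (hconn : G.Connected) (hcard : 3 ≤ Fintype.card V)
    (hthr : ∀ v : V, thr v ≤ ⌈(G.degree v : ℚ) / 3⌉₊) :
    ∃ X : Finset V, IsPerfectTargetSet G thr X ∧
      (X.card : ℝ) ≤ 0.45 * Fintype.card V := by
  set S : Finset V := {v | 2 ≤ G.degree v}
  have hS : ∀ v ∉ S, ∃ u ∈ S, G.neighborFinset v = {u} := fun v hv => by
    obtain ⟨u, hu, hN⟩ := exists_neighborFinset_eq_singleton hconn hcard (by simpa [S] using hv)
    exact ⟨u, by simpa [S] using hu, hN⟩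
  have hthr3 (v : V) : 3 * thr v ≤ G.degree v + 2 := three_mul_le_add_two_of_le_ceil (hthr v)
  have hthr_leaf : ∀ v ∉ S, thr v ≤ 1 := fun v hv => by
    obtain ⟨u, -, hN⟩ := hS v hv
    have := hthr3 v
    rw [← G.card_neighborFinset_eq_degree, hN, card_singleton] at this
    omega
  obtain ⟨σ, hσ⟩ := exists_twenty_mul_card_le hS (fun w hw => (mem_filter.mp hw).2) hthr3
  refine ⟨targetSetOfOrder G thr (leafLastKey S σ), isPerfectTargetSet_targetSetOfOrder, ?_⟩
  rw [targetSetOfOrder_leafLastKey hS hthr_leaf σ]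
  have hσℝ := (Nat.cast_le (α := ℝ)).mpr hσ
  push_cast at hσℝ
  linarith
end

section
/- For any permutation σ of V(G), the set P_σ = {v ∈ V(G) : the number of neighbours of v preceding v in σ is less than thr(v)} is a perfect target set of (G, thr). -/
open scoped Classical

/-! Order the vertices by a rank `r : V → ℕ` (ties allowed). A vertex outside `P_r` has at least
`thr v` neighbours of smaller rank, so by strong induction on the rank every vertex `v` is active
after `r v + 1` rounds. For a bijection `σ : V ≃ Fin n` all ranks are below `n`, so `n` rounds
activate everything. -/

section Activation

variable {V : Type*} [Fintype V] (G : SimpleGraph V) (thr : V → ℕ)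

theorem actSeq_monotone (X : Finset V) : Monotone (actSeq G thr X) :=
  monotone_nat_of_le_succ fun _ => Finset.subset_union_left

theorem mem_actSeq_succ_of_le_card {X : Finset V} {i : ℕ} {v : V}
    (h : thr v ≤ (G.neighborFinset v ∩ actSeq G thr X i).card) : v ∈ actSeq G thr X (i + 1) :=
  Finset.mem_union_right _ (Finset.mem_filter.mpr ⟨Finset.mem_univ v, h⟩)

theorem mem_actSeq_rank_add_one (r : V → ℕ) (v : V) :
    v ∈ actSeq G thr (Finset.univ.filter fun v =>
      ((G.neighborFinset v).filter fun u => r u < r v).card < thr v) (r v + 1) := by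
  set P := Finset.univ.filter fun v => ((G.neighborFinset v).filter fun u => r u < r v).card < thr v
  induction hv : r v using Nat.strong_induction_on generalizing v with
  | _ n ih =>
    subst hv
    by_cases hvP : v ∈ P
    · exact actSeq_monotone G thr P (Nat.zero_le _) hvP
    · have hthr : thr v ≤ ((G.neighborFinset v).filter fun u => r u < r v).card := by
        simpa [P] using hvP
      have hlower : (G.neighborFinset v).filter (fun u => r u < r v) ⊆
          G.neighborFinset v ∩ actSeq G thr P (r v) := fun u hu => by
        obtain ⟨hadj, hlt⟩ := Finset.mem_filter.mp hu
        exact Finset.mem_inter.mpr ⟨hadj, actSeq_monotone G thr P hlt (ih (r u) hlt u rfl)⟩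
      exact mem_actSeq_succ_of_le_card G thr (hthr.trans (Finset.card_le_card hlower))

end Activation

theorem permutation_set_is_perfect {V : Type*} [Fintype V]
    (G : SimpleGraph V) (thr : V → ℕ) (σ : V ≃ Fin (Fintype.card V)) :
    IsPerfectTargetSet G thr
      (Finset.univ.filter (fun v =>
        ((G.neighborFinset v).filter (fun u => σ u < σ v)).card < thr v)) :=
  Finset.eq_univ_iff_forall.mpr fun v =>
    actSeq_monotone G thr _ (σ v).isLt (mem_actSeq_rank_add_one G thr (fun v => (σ v : ℕ)) v)
end

section
/- For a uniformly random permutation σ of V(G), the probability that a fixed vertex v belongs to P_σ = {u : number of neighbours of u preceding u in σ is less than thr(u)} equals thr(v)/(deg(v)+1), provided thr(v) ≤ deg(v)+1. -/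
/-!
Put `S = {v} ∪ N(v)`; the number of neighbours of `v` preceding it in `σ` is the rank of `v`
within `S` under `σ`. Precomposing `σ` with the transposition `(u v)`, `u ∈ S`, is a bijection on
orders that turns the rank of `u` into the rank of `v`, so `#{σ | rank u < t}` is the same for
every `u ∈ S`. Summing over `u ∈ S` and counting the other way round, for every single `σ`
the ranks of the elements of `S` are exactly `0, …, |S| - 1`, of which `t` are below `t`. Hence
`|S| · #{σ | rank v < t} = t · #orders`.
-/

open Finset

namespace Finset

variable {ι α : Type*} [LinearOrder α]

def rankIn (s : Finset ι) (f : ι → α) (u : ι) : ℕ := #{w ∈ s | f w < f u}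

lemma rankIn_lt_card {s : Finset ι} {f : ι → α} {u : ι} (hu : u ∈ s) : rankIn s f u < #s :=
  card_lt_card <| filter_ssubset.2 ⟨u, hu, lt_irrefl _⟩

lemma rankIn_lt_rankIn {s : Finset ι} {f : ι → α} {u u' : ι} (hu : u ∈ s)
    (h : f u < f u') : rankIn s f u < rankIn s f u' := by
  refine card_lt_card ⟨fun w hw => ?_, fun hsub => ?_⟩
  · rw [mem_filter] at hw ⊢
    exact ⟨hw.1, hw.2.trans h⟩
  exact lt_irrefl _ (mem_filter.1 (hsub (mem_filter.2 ⟨hu, h⟩))).2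

lemma injOn_rankIn {s : Finset ι} {f : ι → α} (hf : Set.InjOn f s) : Set.InjOn (rankIn s f) s := by
  intro u hu u' hu' huu'
  by_contra hne
  rcases lt_or_gt_of_ne (hf.ne hu hu' hne) with h | h
  · exact (rankIn_lt_rankIn hu h).ne huu'
  · exact (rankIn_lt_rankIn hu' h).ne' huu'

lemma image_rankIn {s : Finset ι} {f : ι → α} (hf : Set.InjOn f s) :
    s.image (rankIn s f) = range #s := by
  refine eq_of_subset_of_card_le (fun j hj => ?_) ?_
  · obtain ⟨u, hu, rfl⟩ := mem_image.1 hj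
    exact mem_range.2 (rankIn_lt_card hu)
  · rw [card_image_of_injOn (injOn_rankIn hf), card_range]

theorem card_filter_rankIn_lt {s : Finset ι} {f : ι → α} (hf : Set.InjOn f s) {t : ℕ}
    (ht : t ≤ #s) : #{u ∈ s | rankIn s f u < t} = t := by
  classical
  calc #{u ∈ s | rankIn s f u < t} = #{j ∈ s.image (rankIn s f) | j < t} := by
        rw [filter_image, card_image_of_injOn ((injOn_rankIn hf).mono (filter_subset _ _))]
    _ = #(range t) := by
        rw [image_rankIn hf]
        congr 1
        ext j
        simp only [mem_filter, mem_range]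
        omega
    _ = t := card_range t

lemma rankIn_insert_self [DecidableEq ι] (s : Finset ι) (f : ι → α) (v : ι) :
    rankIn (insert v s) f v = #{w ∈ s | f w < f v} := by
  rw [rankIn, filter_insert, if_neg (lt_irrefl _)]

lemma rankIn_comp_perm {s : Finset ι} (f : ι → α) {π : Equiv.Perm ι} (hπ : ∀ x, π x ∈ s ↔ x ∈ s)
    (u : ι) : rankIn s (f ∘ π) u = rankIn s f (π u) :=
  card_equiv π fun w => by simp only [mem_filter, Function.comp, hπ]

end Finset

section Equiv

variable {V α : Type*} [Fintype V] [DecidableEq V] [LinearOrder α] [Fintype α]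

lemma card_rankIn_lt_eq_of_mem {s : Finset V} {u v : V} (hu : u ∈ s) (hv : v ∈ s) (t : ℕ) :
    #{σ : V ≃ α | rankIn s σ u < t} = #{σ : V ≃ α | rankIn s σ v < t} := by
  refine card_equiv ((Equiv.swap u v).equivCongr (Equiv.refl α)) fun σ => ?_
  have hswap : ∀ x, Equiv.swap u v x ∈ s ↔ x ∈ s := fun x => by
    rw [Equiv.swap_apply_def]; split_ifs <;> simp_all
  have hcomp : ⇑((Equiv.swap u v).equivCongr (Equiv.refl α) σ) = σ ∘ Equiv.swap u v := rfl
  simp only [mem_filter, mem_univ, true_and, hcomp, rankIn_comp_perm _ hswap, Equiv.swap_apply_right]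

theorem card_mul_card_rankIn_lt {s : Finset V} {v : V} (hv : v ∈ s) {t : ℕ} (ht : t ≤ #s) :
    #s * #{σ : V ≃ α | rankIn s σ v < t} = t * Fintype.card (V ≃ α) := by
  calc #s * #{σ : V ≃ α | rankIn s σ v < t} = ∑ u ∈ s, #{σ : V ≃ α | rankIn s σ u < t} := by
        rw [sum_congr rfl fun u hu => card_rankIn_lt_eq_of_mem hu hv t, sum_const, smul_eq_mul]
    _ = ∑ σ : V ≃ α, #{u ∈ s | rankIn s σ u < t} :=
        sum_card_bipartiteAbove_eq_sum_card_bipartiteBelow _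
    _ = ∑ _σ : V ≃ α, t := sum_congr rfl fun σ _ => card_filter_rankIn_lt σ.injective.injOn ht
    _ = t * Fintype.card (V ≃ α) := by rw [sum_const, card_univ, smul_eq_mul, mul_comm]

end Equiv

open scoped Classical

theorem probability_in_permutation_set {V : Type*} [Fintype V]
    (G : SimpleGraph V) (thr : V → ℕ) (v : V) (h : thr v ≤ G.degree v + 1) :
    ((Finset.univ.filter (fun σ : V ≃ Fin (Fintype.card V) =>
        ((G.neighborFinset v).filter (fun u => σ u < σ v)).card < thr v)).card : ℝ) /
      (Fintype.card (V ≃ Fin (Fintype.card V))) = (thr v : ℝ) / (G.degree v + 1) := by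
  set S := insert v (G.neighborFinset v)
  have hS : #S = G.degree v + 1 := by
    rw [card_insert_of_notMem (G.notMem_neighborFinset_self v), G.card_neighborFinset_eq_degree]
  have key := card_mul_card_rankIn_lt (α := Fin (Fintype.card V)) (mem_insert_self v _) (hS ▸ h)
  simp only [S, rankIn_insert_self, hS] at key
  have : Nonempty (V ≃ Fin (Fintype.card V)) := ⟨Fintype.equivFin V⟩
  rw [div_eq_div_iff (by positivity) (by positivity)]
  exact_mod_cast (mul_comm _ _).trans key
end

section
/- Suppose all dual thresholds equal d, i.e., thr(v) = deg(v) − d for every vertex v (with deg(v) ≥ d). Then X ⊆ V(G) is a perfect target set of (G, thr) if and only if the induced subgraph G[V(G) \ X] is d-degenerate. -/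
/-!
A vertex outside `X` can only become active after at least `thr v` of its neighbours are, so the
first vertex of a set `W` disjoint from `X` to be activated sees at most `deg v - thr v` neighbours
inside `W`. Conversely, the activation process stabilises within `|V|` rounds, and if the final
active set were not everything, its complement would contain a vertex with enough active
neighbours to be activated in one more round. With `thr v = deg v - d`, "at least `thr v`
neighbours outside `W`" says "at most `d` neighbours inside `W`", which is `d`-degeneracy.
-/

open scoped Classical

open Finset

namespace SimpleGraph

variable {V : Type*} [Fintype V] (G : SimpleGraph V) (thr : V → ℕ) (X : Finset V)

lemma mem_actSeq_succ {i : ℕ} {v : V} :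
    v ∈ actSeq G thr X (i + 1) ↔
      v ∈ actSeq G thr X i ∨ thr v ≤ #(G.neighborFinset v ∩ actSeq G thr X i) := by
  simp [actSeq]

lemma actSeq_mono : Monotone (actSeq G thr X) :=
  monotone_nat_of_le_succ fun _ => subset_union_left

lemma actSeq_succ_succ_of_succ_eq {i : ℕ} (h : actSeq G thr X (i + 1) = actSeq G thr X i) :
    actSeq G thr X (i + 2) = actSeq G thr X (i + 1) := by
  rw [actSeq, h]
  exact h

/-- Until the process stalls, every round activates at least one new vertex. -/
lemma actSeq_succ_eq_or_le_card (i : ℕ) :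
    actSeq G thr X (i + 1) = actSeq G thr X i ∨ i ≤ #(actSeq G thr X i) := by
  induction i with
  | zero => exact .inr (Nat.zero_le _)
  | succ i ih =>
    rcases ih with hstall | hle
    · exact .inl (actSeq_succ_succ_of_succ_eq G thr X hstall)
    · by_cases hstall : actSeq G thr X (i + 1) = actSeq G thr X i
      · exact .inl (actSeq_succ_succ_of_succ_eq G thr X hstall)
      · have hlt : actSeq G thr X i ⊂ actSeq G thr X (i + 1) :=
          (actSeq_mono G thr X i.le_succ).ssubset_of_ne (Ne.symm hstall)
        exact .inr (by have := card_lt_card hlt; omega)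

lemma actSeq_card_succ : actSeq G thr X (Fintype.card V + 1) = actFinal G thr X := by
  rcases actSeq_succ_eq_or_le_card G thr X (Fintype.card V) with hstall | hle
  · exact hstall
  · have huniv : actFinal G thr X = univ := eq_univ_of_card _ (le_antisymm (card_le_univ _) hle)
    rw [huniv]
    exact univ_subset_iff.mp (huniv ▸ actSeq_mono G thr X (Fintype.card V).le_succ)

lemma mem_actFinal_of_le_card {v : V} (hv : thr v ≤ #(G.neighborFinset v ∩ actFinal G thr X)) :
    v ∈ actFinal G thr X := by
  rw [← actSeq_card_succ, mem_actSeq_succ]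
  exact .inr hv

/-- The first vertex of `W` to become active had all its triggering neighbours outside `W`. -/
lemma exists_le_card_neighborFinset_sdiff {W : Finset V} (hW : W ⊆ univ \ X) :
    ∀ t, (∃ w ∈ W, w ∈ actSeq G thr X t) → ∃ v ∈ W, thr v ≤ #(G.neighborFinset v \ W)
  | 0, ⟨w, hwW, hwX⟩ => absurd hwX (mem_sdiff.mp (hW hwW)).2
  | t + 1, ⟨w, hwW, hw⟩ => by
    by_cases hearlier : ∃ w ∈ W, w ∈ actSeq G thr X t
    · exact exists_le_card_neighborFinset_sdiff hW t hearlier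
    · push Not at hearlier
      have hthr : thr w ≤ #(G.neighborFinset w ∩ actSeq G thr X t) :=
        ((mem_actSeq_succ G thr X).mp hw).resolve_left (hearlier w hwW)
      refine ⟨w, hwW, hthr.trans (card_le_card fun u hu => ?_)⟩
      rw [mem_inter] at hu
      exact mem_sdiff.mpr ⟨hu.1, fun huW => hearlier u huW hu.2⟩

theorem isPerfectTargetSet_iff :
    IsPerfectTargetSet G thr X ↔
      ∀ W : Finset V, W ⊆ univ \ X → W.Nonempty →
        ∃ v ∈ W, thr v ≤ #(G.neighborFinset v \ W) := by
  constructor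
  · intro hperf W hW ⟨w, hw⟩
    have hw_final : w ∈ actFinal G thr X := (hperf : actFinal G thr X = univ) ▸ mem_univ w
    exact exists_le_card_neighborFinset_sdiff G thr X hW (Fintype.card V) ⟨w, hw, hw_final⟩
  · intro hW
    by_contra hperf
    have hXW : univ \ actFinal G thr X ⊆ univ \ X :=
      sdiff_subset_sdiff subset_rfl (actSeq_mono G thr X (Nat.zero_le _))
    obtain ⟨v, hv, hthr⟩ := hW _ hXW (sdiff_nonempty.mpr fun h => hperf (univ_subset_iff.mp h))
    have hN : G.neighborFinset v \ (univ \ actFinal G thr X) =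
        G.neighborFinset v ∩ actFinal G thr X := by
      ext; simp
    exact (mem_sdiff.mp hv).2 (mem_actFinal_of_le_card G thr X (hN ▸ hthr))

lemma degree_sub_le_card_neighborFinset_sdiff_iff (d : ℕ) (v : V) (W : Finset V) :
    G.degree v - d ≤ #(G.neighborFinset v \ W) ↔ #(G.neighborFinset v ∩ W) ≤ d := by
  have hsplit := card_inter_add_card_sdiff (G.neighborFinset v) W
  rw [card_neighborFinset_eq_degree] at hsplit
  omega

end SimpleGraph

theorem dual_threshold_degeneracy_general {V : Type*} [Fintype V]
    (G : SimpleGraph V) (d : ℕ) (X : Finset V) :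
    IsPerfectTargetSet G (fun v => G.degree v - d) X ↔
      ∀ W : Finset V, W ⊆ Finset.univ \ X → W.Nonempty →
        ∃ v ∈ W, (G.neighborFinset v ∩ W).card ≤ d := by
  simp only [G.isPerfectTargetSet_iff, G.degree_sub_le_card_neighborFinset_sdiff_iff]

theorem dual_threshold_degeneracy {V : Type*} [Fintype V]
    (G : SimpleGraph V) (d : ℕ) (hd : ∀ v : V, d ≤ G.degree v) (X : Finset V) :
    IsPerfectTargetSet G (fun v => G.degree v - d) X ↔
      ∀ W : Finset V, W ⊆ Finset.univ \ X → W.Nonempty →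
        ∃ v ∈ W, (G.neighborFinset v ∩ W).card ≤ d :=
  dual_threshold_degeneracy_general G d X
end
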